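/- arXiv:2107.02578 — 2 statements merged into one kernel-verified Lean document; each statement's English description precedes it below -/
import Mathlib

section
/- Let x ∈ {0,1}^n, let M be a pairing (matching) of some coordinates of [n], and construct a graph where for each matched pair (y,z) with label w one adds a path whose parity structure depends on x_y ⊕ x_z ⊕ w as in the BHM-to-MAX-CUT reduction: the component for pair i is bipartite if and only if x_y ⊕ x_z ⊕ w_i = 0. Concretely: the graph on 8 vertices a_y, b_y, c_y, d_y, a_z, b_z, c_z, d_z with Alice's edges (a_j, b_j), (c_j, d_j), and (a_j, d_j) if x_j = 0 or (a_j, c_j) if x_j = 1 for j ∈ {y, z}, plus Bob's edges (d_y, a_z) and either (d_z, a_y) if w = 0 or (d_z, b_y) if w = 1, contains an odd cycle if and only if x_y ⊕ x_z ⊕ w = 1. -/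
/-!
The gadget is a closed walk `a_y → d_y → a_z → d_z → a_y` whose four legs have lengths
`1 + x_y`, `1`, `1 + x_z` and `1 + w`, with the remaining vertices hanging off it as leaves.
So it has an odd closed walk iff `x_y + x_z + w` is odd, and otherwise it is bipartite.
-/

/-- The MAX-CUT gadget graph on the 8 vertices
`a_y = 0, b_y = 1, c_y = 2, d_y = 3, a_z = 4, b_z = 5, c_z = 6, d_z = 7`:
Alice adds, for `j ∈ {y, z}`, edges `(a_j, b_j)`, `(c_j, d_j)`, and `(a_j, d_j)` if `x_j = 0`
or `(a_j, c_j)` if `x_j = 1`; Bob adds `(d_y, a_z)` and either `(d_z, a_y)` if `w = 0` or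
`(d_z, b_y)` if `w = 1`. -/
def maxCutGadget (xy xz w : Bool) : SimpleGraph (Fin 8) :=
  SimpleGraph.fromEdgeSet
    ({s(0, 1), s(2, 3), s(4, 5), s(6, 7), s(3, 4),
      (if xy then s(0, 2) else s(0, 3)),
      (if xz then s(4, 6) else s(4, 7)),
      (if w then s(7, 1) else s(7, 0))} : Set (Sym2 (Fin 8)))

namespace SimpleGraph

variable {V : Type*} {G : SimpleGraph V}

lemma exists_walk_length_eq_one_add_toNat {u v : V} (m : V) (b : Bool)
    (h : if b then G.Adj u m ∧ G.Adj m v else G.Adj u v) :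
    ∃ p : G.Walk u v, p.length = 1 + b.toNat := by
  cases b
  · exact ⟨h.toWalk, rfl⟩
  · exact ⟨.cons h.1 h.2.toWalk, rfl⟩

end SimpleGraph

open SimpleGraph

section

variable (xy xz w : Bool)

lemma maxCutGadget_exists_loop :
    ∃ p : (maxCutGadget xy xz w).Walk 0 0, p.length = 4 + xy.toNat + xz.toNat + w.toNat := by
  obtain ⟨p₁, hp₁⟩ := exists_walk_length_eq_one_add_toNat (G := maxCutGadget xy xz w)
    (u := 0) (v := 3) 2 xy (by cases xy <;> simp [maxCutGadget])
  obtain ⟨p₃, hp₃⟩ := exists_walk_length_eq_one_add_toNat (G := maxCutGadget xy xz w)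
    (u := 4) (v := 7) 6 xz (by cases xz <;> simp [maxCutGadget])
  obtain ⟨p₄, hp₄⟩ := exists_walk_length_eq_one_add_toNat (G := maxCutGadget xy xz w)
    (u := 7) (v := 0) 1 w (by cases w <;> simp [maxCutGadget])
  have h₂ : (maxCutGadget xy xz w).Adj 3 4 := by simp [maxCutGadget]
  refine ⟨p₁.append (.cons h₂ (p₃.append p₄)), ?_⟩
  simp only [Walk.length_append, Walk.length_cons, hp₁, hp₃, hp₄]
  ring

lemma even_four_add_toNat_iff :
    Even (4 + xy.toNat + xz.toNat + w.toNat) ↔ xor xy (xor xz w) = false := by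
  cases xy <;> cases xz <;> cases w <;> decide

variable {xy xz w}

lemma maxCutGadget_colorable_of_xor_eq_false (h : xor xy (xor xz w) = false) :
    (maxCutGadget xy xz w).Colorable 2 := by
  -- colour `a_y, b_y, c_y, d_y, a_z, b_z, c_z, d_z` by parity of the distance from `a_y`
  let c : (maxCutGadget xy xz w).Coloring Bool :=
    Coloring.mk ![false, true, xy, !xy, xy, !xy, xor xy xz, !xor xy xz] <| by
      cases xy <;> cases xz <;> cases w <;> simp [maxCutGadget] at h ⊢ <;> decide
  simpa using c.colorable

end

/-- The MAX-CUT gadget contains an odd cycle (equivalently, is not bipartite) if and only if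
`x_y ⊕ x_z ⊕ w = 1`. -/
theorem stmt_3 (xy xz w : Bool) :
    ¬ (maxCutGadget xy xz w).Colorable 2 ↔ xor xy (xor xz w) = true := by
  rw [← not_iff_not, not_not, Bool.not_eq_true]
  refine ⟨fun hc => ?_, maxCutGadget_colorable_of_xor_eq_false⟩
  obtain ⟨p, hp⟩ := maxCutGadget_exists_loop xy xz w
  rw [← even_four_add_toNat_iff, ← hp]
  exact two_colorable_iff_forall_loop_even.mp hc 0 p
end

section
/- Let K be the clique gadget in the maximum matching reduction: take disjoint vertex sets A_0, B_0, B_1 of sizes t−s, t−s, s respectively (0 ≤ s ≤ t), with a perfect matching between A_0 and B_0 (edge (a_j, b_j) for each j with x_j = 0), and a clique on B_0 ∪ B_1. Then the connected component A_0 ∪ B_0 ∪ B_1 has 2t − s vertices and its maximum matching has size ⌊(2t − s)/2⌋; in particular, it has a perfect matching of size t − s/2 when s is even, and maximum matching size t − (s+1)/2 when s is odd. -/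
/-- The clique gadget of the maximum matching reduction on vertex sets `A_0, B_0, B_1` of sizes
`t−s, t−s, s`: a perfect matching between `A_0` and `B_0` (the `j`-th vertex of `A_0` is joined
to the `j`-th vertex of `B_0`) together with a clique on `B_0 ∪ B_1`. -/
def cliqueGadget (t s : ℕ) : SimpleGraph (Fin (t - s) ⊕ (Fin (t - s) ⊕ Fin s)) :=
  SimpleGraph.fromRel (fun u v =>
    (∃ j, u = Sum.inl j ∧ v = Sum.inr (Sum.inl j)) ∨
    ((∃ a, u = Sum.inr a) ∧ (∃ b, v = Sum.inr b)))

/-!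
A matching covers exactly twice as many vertices as it has edges, so a matching of the gadget
has at most `⌊(2t − s)/2⌋` edges. The `t − s` pendant edges `a_j b_j`, together with a matching
of `⌊s/2⌋` edges inside the clique on `B_1`, attain this bound; when `s` is even they cover every
vertex.
-/

namespace SimpleGraph

variable {V : Type*} {G : SimpleGraph V}

namespace Subgraph

variable {M : G.Subgraph}

lemma IsMatching.ncard_verts_eq_two_mul_ncard_edgeSet [Finite V] (h : M.IsMatching) :
    M.verts.ncard = 2 * M.edgeSet.ncard := by
  have := Fintype.ofFinite M.edgeSet
  have hfiber (e : M.edgeSet) : Nat.card {v // h.toEdge v = e} = 2 := by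
    obtain ⟨e, he⟩ := e
    induction e using Sym2.ind with | h u v => ?_
    change Nat.card (h.toEdge ⁻¹' {_}) = 2
    rw [h.toEdge_preimage_singleton he, Nat.card_coe_set_eq, Set.ncard_pair]
    simpa using he.ne
  rw [← Nat.card_coe_set_eq, ← Nat.card_coe_set_eq,
    ← Nat.card_congr (Equiv.sigmaFiberEquiv h.toEdge), Nat.card_sigma]
  simp [hfiber, mul_comm]

lemma IsMatching.two_mul_ncard_edgeSet_le [Finite V] (h : M.IsMatching) :
    2 * M.edgeSet.ncard ≤ Nat.card V :=
  h.ncard_verts_eq_two_mul_ncard_edgeSet ▸ Set.ncard_le_card _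

lemma IsMatching.isPerfectMatching_of_two_mul_ncard_edgeSet_eq [Finite V] (h : M.IsMatching)
    (hM : 2 * M.edgeSet.ncard = Nat.card V) : M.IsPerfectMatching := by
  refine ⟨h, fun v => ?_⟩
  rw [(Set.eq_univ_iff_ncard _).mpr (h.ncard_verts_eq_two_mul_ncard_edgeSet.trans hM)]
  trivial

lemma IsMatching.exists_isMatching_ncard_verts_of_isClique [Finite V] (hM : M.IsMatching)
    {u : Set V} (hu : G.IsClique u) (hd : Disjoint M.verts u) :
    ∃ M' : G.Subgraph, M'.IsMatching ∧ M'.verts.ncard = M.verts.ncard + 2 * (u.ncard / 2) := by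
  obtain ⟨w, hwu, hw⟩ := Set.exists_subset_card_eq (Nat.mul_div_le u.ncard 2)
  obtain ⟨N, rfl, hN⟩ := ((hu.subset hwu).even_iff_exists_isMatching (Set.toFinite _)).mp
    (hw ▸ even_two_mul _)
  have hd' : Disjoint M.verts N.verts := hd.mono_right hwu
  refine ⟨M ⊔ N, hM.sup hN ?_, ?_⟩
  · rwa [hM.support_eq_verts, hN.support_eq_verts]
  · rw [verts_sup, Set.ncard_union_eq hd', hw]

end Subgraph

end SimpleGraph

open SimpleGraph Subgraph

section cliqueGadget

variable {t s : ℕ}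

lemma cliqueGadget_adj_inl_inr_inl (j : Fin (t - s)) :
    (cliqueGadget t s).Adj (.inl j) (.inr (.inl j)) := by
  simp [cliqueGadget]

lemma isClique_cliqueGadget_range_inr : (cliqueGadget t s).IsClique (Set.range Sum.inr) := by
  rintro _ ⟨a, rfl⟩ _ ⟨b, rfl⟩ hab
  exact (fromRel_adj _ _ _).mpr ⟨hab, .inl (.inr ⟨⟨a, rfl⟩, b, rfl⟩)⟩

lemma cliqueGadget_exists_isMatching_verts :
    ∃ M : (cliqueGadget t s).Subgraph,
      M.verts = Set.range Sum.inl ∪ Set.range (Sum.inr ∘ Sum.inl) ∧ M.IsMatching := by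
  refine IsMatching.exists_of_disjoint_sets_of_equiv ?_
    ((Equiv.ofInjective _ Sum.inl_injective).symm.trans
      (Equiv.ofInjective _ (Sum.inr_injective.comp Sum.inl_injective))) ?_
  · exact Set.isCompl_range_inl_range_inr.disjoint.mono_right (Set.range_comp_subset_range _ _)
  · rintro ⟨_, j, rfl⟩
    convert cliqueGadget_adj_inl_inr_inl j
    simp

lemma cliqueGadget_exists_isMatching_ncard_verts (hst : s ≤ t) :
    ∃ M : (cliqueGadget t s).Subgraph,
      M.IsMatching ∧ M.verts.ncard = 2 * ((2 * t - s) / 2) := by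
  obtain ⟨M₁, hM₁verts, hM₁⟩ := cliqueGadget_exists_isMatching_verts (t := t) (s := s)
  have hB₁ : Disjoint M₁.verts (Set.range (Sum.inr ∘ Sum.inr)) := by
    rw [hM₁verts, Set.disjoint_right]
    rintro _ ⟨j, rfl⟩ (⟨k, hk⟩ | ⟨k, hk⟩) <;> simp at hk
  obtain ⟨M, hM, hMverts⟩ := hM₁.exists_isMatching_ncard_verts_of_isClique
    (isClique_cliqueGadget_range_inr.subset (Set.range_comp_subset_range _ _)) hB₁
  refine ⟨M, hM, ?_⟩
  rw [hMverts, hM₁verts, Set.ncard_union_eq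
      (Set.isCompl_range_inl_range_inr.disjoint.mono_right (Set.range_comp_subset_range _ _)),
    Set.ncard_range_of_injective Sum.inl_injective,
    Set.ncard_range_of_injective (Sum.inr_injective.comp Sum.inl_injective),
    Set.ncard_range_of_injective (Sum.inr_injective.comp Sum.inr_injective)]
  simp only [Nat.card_eq_fintype_card, Fintype.card_fin]
  omega

end cliqueGadget

/-- The clique gadget component `A_0 ∪ B_0 ∪ B_1` has `2t − s` vertices, its maximum matching
has exactly `⌊(2t − s)/2⌋` edges; in particular it has a perfect matching of size `t − s/2` when
`s` is even, and maximum matching size at most `t − (s+1)/2` when `s` is odd. -/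
theorem stmt_18 (t s : ℕ) (hst : s ≤ t) :
    Fintype.card (Fin (t - s) ⊕ (Fin (t - s) ⊕ Fin s)) = 2 * t - s ∧
    IsGreatest {k | ∃ M : (cliqueGadget t s).Subgraph, M.IsMatching ∧ M.edgeSet.ncard = k}
      ((2 * t - s) / 2) ∧
    (Even s → ∃ M : (cliqueGadget t s).Subgraph,
      M.IsPerfectMatching ∧ M.edgeSet.ncard = t - s / 2) ∧
    (Odd s → ∀ M : (cliqueGadget t s).Subgraph, M.IsMatching →
      M.edgeSet.ncard ≤ t - (s + 1) / 2) := by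
  have hcard : Fintype.card (Fin (t - s) ⊕ (Fin (t - s) ⊕ Fin s)) = 2 * t - s := by
    simp only [Fintype.card_sum, Fintype.card_fin]
    omega
  have hle (M : (cliqueGadget t s).Subgraph) (hM : M.IsMatching) :
      2 * M.edgeSet.ncard ≤ 2 * t - s := by
    simpa only [Nat.card_eq_fintype_card, hcard] using hM.two_mul_ncard_edgeSet_le
  obtain ⟨M, hM, hMverts⟩ := cliqueGadget_exists_isMatching_ncard_verts hst
  have hMedges : M.edgeSet.ncard = (2 * t - s) / 2 := by
    have := hM.ncard_verts_eq_two_mul_ncard_edgeSet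
    omega
  refine ⟨hcard, ⟨⟨M, hM, hMedges⟩, ?_⟩, fun hs => ⟨M, ?_, ?_⟩, fun hs N hN => ?_⟩
  · rintro k ⟨N, hN, rfl⟩
    have := hle N hN
    omega
  · refine hM.isPerfectMatching_of_two_mul_ncard_edgeSet_eq ?_
    rw [Nat.card_eq_fintype_card, hcard, hMedges]
    have := Nat.even_iff.mp hs
    omega
  · have := Nat.even_iff.mp hs
    omega
  · have := hle N hN
    have := Nat.odd_iff.mp hs
    omega
end
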